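/- arXiv:1904.01609 — 3 statements merged into one kernel-verified Lean document; each statement's English description precedes it below -/
import Mathlib

section
/- Let a, b > 0 be real numbers and define f(x) = 1/(−a·ln x + b) for x > 0. Then for every c with 0 < c < 1 and every x with 0 < x < e^{−2}, one has f(c·x) ≥ c·f(x). -/
/-!
Write `D = -a log x + b` and `t = -a log c ≥ 0`, so that `-a log (c x) + b = D + t` and the claim
reads `c (D + t) ≤ D`, i.e. `c t ≤ (1 - c) D`. Since `log x < -2` we have `D ≥ a`, and
`-c log c ≤ 1 - c` gives `c t ≤ a (1 - c)`.
-/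

open Real

lemma Real.mul_neg_log_le_one_sub {c : ℝ} (hc : 0 < c) : c * -log c ≤ 1 - c := by
  have h := one_sub_inv_le_log_of_pos hc
  calc c * -log c ≤ c * (c⁻¹ - 1) := by gcongr; linarith
    _ = 1 - c := by rw [mul_sub, mul_inv_cancel₀ hc.ne', mul_one]

lemma mul_one_div_le_one_div_add {c D t : ℝ} (hD : 0 < D) (ht : 0 ≤ t)
    (h : c * t ≤ (1 - c) * D) : c * (1 / D) ≤ 1 / (D + t) := by
  rw [mul_one_div, div_le_div_iff₀ hD (by linarith)]
  linarith

lemma le_neg_mul_log_add {a b x : ℝ} (ha : 0 ≤ a) (hb : 0 ≤ b) (hx : log x ≤ -1) :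
    a ≤ -a * log x + b := by
  nlinarith

/-- Lemma 3.1 (second part): for `a, b > 0`, `f x = 1/(-a * ln x + b)`,
`0 < c < 1` and `0 < x < e⁻²`, one has `f (c*x) ≥ c * f x`. -/
theorem stmt1 (a b c x : ℝ) (ha : 0 < a) (hb : 0 < b)
    (hc0 : 0 < c) (hc1 : c < 1)
    (hx0 : 0 < x) (hx : x < Real.exp (-2)) :
    1 / (-a * Real.log (c * x) + b) ≥ c * (1 / (-a * Real.log x + b)) := by
  have hlog_x : log x ≤ -1 := by
    have := log_lt_log hx0 hx
    rw [log_exp] at this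
    linarith
  have hD : a ≤ -a * log x + b := le_neg_mul_log_add ha.le hb.le hlog_x
  have ht : 0 ≤ -a * log c := by nlinarith [log_neg hc0 hc1]
  have hsplit : -a * log (c * x) + b = (-a * log x + b) + -a * log c := by
    rw [log_mul hc0.ne' hx0.ne']; ring
  rw [hsplit, ge_iff_le]
  refine mul_one_div_le_one_div_add (by linarith) ht ?_
  calc c * (-a * log c) = a * (c * -log c) := by ring
    _ ≤ a * (1 - c) := by gcongr; exact mul_neg_log_le_one_sub hc0
    _ ≤ (1 - c) * (-a * log x + b) := by rw [mul_comm]; gcongr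
end

section
/- Let a, b > 0 be real numbers and define f(x) = 1/(−a·ln x + b) for x > 0. Then for every c with 0 < c < 1 and every x with 0 < x < e^{−2}, one has f(c·x) + f((1−c)·x) ≥ f(x). -/
/-!
Write `D = -a ln x + b`, `s = -ln c`, `t = -ln (1 - c)`, so the two denominators on the left are
`D + a s` and `D + a t`. Clearing denominators, the inequality becomes `a² s t ≤ D²`. Now `s t ≤ 1`
because `-ln c ≤ (1 - c)/c` and `-ln (1 - c) ≤ c/(1 - c)`, while `x < e⁻²` gives `D > 2a + b > a`.
-/

open Real

theorem log_mul_log_one_sub_le_one {c : ℝ} (hc0 : 0 < c) (hc1 : c < 1) :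
    log c * log (1 - c) ≤ 1 := by
  have hc1' : 0 < 1 - c := by linarith
  have hs : -log c ≤ c⁻¹ - 1 := by linarith [one_sub_inv_le_log_of_pos hc0]
  have ht : -log (1 - c) ≤ (1 - c)⁻¹ - 1 := by linarith [one_sub_inv_le_log_of_pos hc1']
  calc log c * log (1 - c) = -log c * -log (1 - c) := by ring
    _ ≤ (c⁻¹ - 1) * ((1 - c)⁻¹ - 1) :=
        mul_le_mul hs ht (neg_nonneg.2 (log_nonpos hc1'.le (by linarith)))
          ((neg_nonneg.2 (log_nonpos hc0.le hc1.le)).trans hs)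
    _ = 1 := by field_simp; ring

theorem one_div_le_one_div_add_one_div_of_mul_le_sq {D p q : ℝ} (hD : 0 < D) (hp : 0 ≤ p)
    (hq : 0 ≤ q) (hpq : p * q ≤ D ^ 2) : 1 / D ≤ 1 / (D + p) + 1 / (D + q) := by
  rw [div_add_div _ _ (by positivity) (by positivity), div_le_div_iff₀ hD (by positivity)]
  nlinarith

/-- Lemma 3.1 (third part): for `a, b > 0`, `f x = 1/(-a * ln x + b)`,
`0 < c < 1` and `0 < x < e⁻²`, one has `f (c*x) + f ((1-c)*x) ≥ f x`. -/
theorem stmt2 (a b c x : ℝ) (ha : 0 < a) (hb : 0 < b)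
    (hc0 : 0 < c) (hc1 : c < 1)
    (hx0 : 0 < x) (hx : x < Real.exp (-2)) :
    1 / (-a * Real.log (c * x) + b) + 1 / (-a * Real.log ((1 - c) * x) + b) ≥
      1 / (-a * Real.log x + b) := by
  have hlogx : log x < -2 := by
    rw [← log_exp (-2)]; exact log_lt_log hx0 hx
  set D := -a * log x + b
  have haD : a < D := by nlinarith
  have hsplit (y : ℝ) (hy : 0 < y) : -a * log (y * x) + b = D + a * -log y := by
    rw [log_mul hy.ne' hx0.ne']; ring
  have hc1' : 0 < 1 - c := by linarith
  rw [hsplit c hc0, hsplit (1 - c) hc1', ge_iff_le]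
  refine one_div_le_one_div_add_one_div_of_mul_le_sq (by linarith)
    (mul_nonneg ha.le (neg_nonneg.2 (log_nonpos hc0.le hc1.le)))
    (mul_nonneg ha.le (neg_nonneg.2 (log_nonpos hc1'.le (by linarith)))) ?_
  calc a * -log c * (a * -log (1 - c)) = a ^ 2 * (log c * log (1 - c)) := by ring
    _ ≤ a ^ 2 * 1 := by gcongr; exact log_mul_log_one_sub_le_one hc0 hc1
    _ ≤ D ^ 2 := by nlinarith
end

section
/- Let a, b, k > 0 and 0 < c ≤ 1 be real numbers, and let λ satisfy 0 < λ < min(e^{−2}, e^{(b−k−1)/a}). Setting f₁(x) = 1/(b − a·ln x) and f₂(x) = 1/(b − a·ln x − k), one has f₁(c·λ)/f₂(λ) > c/(1+k); equivalently, (b − k − a·ln λ)/(b − a·ln(c·λ)) > c/(1+k). -/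
/-!
Write `D = b - a ln λ`, so that `f₁ λ = 1/D` and `f₂ λ = 1/(D - k)`. Since `ln λ < -2` we have
`D ≥ a`, and then `c ln c ≥ c - 1` gives the concavity estimate `f₁ (cλ) ≥ c f₁ λ`. Since
`ln λ < (b - k - 1)/a` we have `D > 1 + k`, which is exactly `f₁ λ / f₂ λ = (D - k)/D > 1/(1 + k)`.
-/

open Real

theorem mul_one_div_sub_mul_log_le_one_div {a b c x : ℝ} (ha : 0 < a) (hc0 : 0 < c) (hc1 : c ≤ 1)
    (hx : 0 < x) (hax : a ≤ b - a * log x) :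
    c * (1 / (b - a * log x)) ≤ 1 / (b - a * log (c * x)) := by
  have hlog : log (c * x) = log c + log x := log_mul hc0.ne' hx.ne'
  have hlogc : log c ≤ 0 := log_nonpos hc0.le hc1
  have hclogc : c - 1 ≤ c * log c := self_sub_one_le_mul_log hc0.le
  have hD : 0 < b - a * log x := ha.trans_le hax
  have hDc : 0 < b - a * log (c * x) := by rw [hlog]; nlinarith
  rw [mul_one_div, div_le_div_iff₀ hD hDc, hlog]
  nlinarith [mul_le_mul_of_nonneg_left hax (sub_nonneg.mpr hc1)]

theorem one_div_one_add_lt_sub_div {k D : ℝ} (hk : 0 < k) (hD : 1 + k < D) :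
    1 / (1 + k) < (D - k) / D := by
  rw [div_lt_div_iff₀ (by linarith) (by linarith)]
  nlinarith

/-- Capacity estimate in the proof of Corollary 3.6: with `f₁ x = 1/(b - a ln x)`,
`f₂ x = 1/(b - a ln x - k)`, `0 < c ≤ 1` and
`0 < λ < min (e⁻²) (e^{(b-k-1)/a})`, one has `f₁ (c*λ) / f₂ λ > c/(1+k)`;
equivalently `(b - k - a ln λ)/(b - a ln (c*λ)) > c/(1+k)`. -/
theorem stmt8 (a b k c lam : ℝ) (ha : 0 < a) (hb : 0 < b) (hk : 0 < k)
    (hc0 : 0 < c) (hc1 : c ≤ 1) (hl0 : 0 < lam)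
    (hl : lam < min (Real.exp (-2)) (Real.exp ((b - k - 1) / a))) :
    (1 / (b - a * Real.log (c * lam))) / (1 / (b - a * Real.log lam - k)) >
        c / (1 + k) ∧
      (b - k - a * Real.log lam) / (b - a * Real.log (c * lam)) > c / (1 + k) := by
  obtain ⟨hl2, hlk⟩ := lt_min_iff.mp hl
  have hL2 : log lam < -2 := (log_lt_iff_lt_exp hl0).mpr hl2
  have hLk : log lam < (b - k - 1) / a := (log_lt_iff_lt_exp hl0).mpr hlk
  set D := b - a * log lam
  have hD : 1 + k < D := by rw [lt_div_iff₀ ha] at hLk; linarith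
  have hconc : c * (1 / D) ≤ 1 / (b - a * log (c * lam)) :=
    mul_one_div_sub_mul_log_le_one_div ha hc0 hc1 hl0 (by linarith [mul_lt_mul_of_pos_left hL2 ha])
  have hmain : c / (1 + k) < (D - k) / (b - a * log (c * lam)) :=
    calc c / (1 + k) = c * (1 / (1 + k)) := (mul_one_div c _).symm
      _ < c * ((D - k) / D) := mul_lt_mul_of_pos_left (one_div_one_add_lt_sub_div hk hD) hc0
      _ = c * (1 / D) * (D - k) := by ring
      _ ≤ 1 / (b - a * log (c * lam)) * (D - k) :=
        mul_le_mul_of_nonneg_right hconc (by linarith)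
      _ = (D - k) / (b - a * log (c * lam)) := one_div_mul_eq_div _ _
  constructor
  · rwa [div_div_eq_mul_div, div_one, one_div_mul_eq_div]
  · rwa [sub_right_comm] at hmain
end
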